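/- The numerator of the convergent of C₁₀ before the high water mark of HWM number 5 is recovered from only the first 10 decimal digits of C₁₀ and the known denominator: ⌊10^10 · C₁₀⌋ = 1234567891, and ⌈(490050000000 : ℝ) · (1234567891 / 10^10)⌉ = 60499999499. -/

import Mathlib

/-- `pos n` is the position in the decimal expansion of Champernowne's constant
of the last digit of the integer `n`. -/
def pos (n : ℕ) : ℕ := ∑ k ∈ Finset.Icc 1 n, (Nat.digits 10 k).length

/-- Champernowne's constant in base ten. -/
noncomputable def C₁₀ : ℝ := ∑' n : ℕ, ((n + 1 : ℕ) : ℝ) / 10 ^ pos (n + 1)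

/-!
Since `pos` grows at least by one per integer, the terms of the series decay geometrically:
the tail starting at `11` is at most `10 ^ (-pos 11) * (10/81 + 110/9) < 10 ^ (-10)`, as
`pos 11 = 13`. The first eleven terms give exactly `0.1234567891`, and this pins down the floor.
-/

lemma pos_succ (n : ℕ) : pos (n + 1) = pos n + (Nat.digits 10 (n + 1)).length :=
  Finset.sum_Icc_succ_top (by omega) _

lemma pos_add_le_pos_add (m k : ℕ) : pos m + k ≤ pos (m + k) := by
  induction k with
  | zero => rfl
  | succ k ih =>
    have hlen : 0 < (Nat.digits 10 (m + k + 1)).length :=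
      List.length_pos_of_ne_nil (Nat.digits_ne_nil_iff_ne_zero.2 (by omega))
    rw [← add_assoc m k 1, pos_succ]
    omega

lemma pos_eleven : pos 11 = 13 := by
  simp [pos, Finset.sum_Icc_succ_top]

noncomputable def champernowneTerm (n : ℕ) : ℝ := n / 10 ^ pos n

lemma champernowneTerm_nonneg (n : ℕ) : 0 ≤ champernowneTerm n := by
  unfold champernowneTerm; positivity

lemma champernowneTerm_add_le (m k : ℕ) :
    champernowneTerm (k + m) ≤ (1 / 10) ^ pos m * ((k + m) * (1 / 10) ^ k) := by
  have hpow : (1 / 10 : ℝ) ^ pos (k + m) ≤ (1 / 10) ^ (pos m + k) := by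
    rw [add_comm k m]
    exact pow_le_pow_of_le_one (by norm_num) (by norm_num) (pos_add_le_pos_add m k)
  calc champernowneTerm (k + m) = (k + m) * (1 / 10 : ℝ) ^ pos (k + m) := by
        simp [champernowneTerm, div_eq_mul_inv]
    _ ≤ (k + m) * (1 / 10) ^ (pos m + k) := by gcongr
    _ = _ := by ring

lemma summable_coe_mul_geometric_one_div_ten :
    Summable (fun k : ℕ => (k : ℝ) * (1 / 10) ^ k) := by
  simpa using summable_pow_mul_geometric_of_norm_lt_one (R := ℝ) 1 (r := 1 / 10) (by norm_num)

lemma summable_add_mul_geometric_one_div_ten (m : ℝ) :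
    Summable (fun k : ℕ => (k + m) * (1 / 10 : ℝ) ^ k) := by
  have hm : Summable (fun k : ℕ => m * (1 / 10 : ℝ) ^ k) :=
    (summable_geometric_of_lt_one (by norm_num) (by norm_num)).mul_left m
  simpa only [add_mul] using summable_coe_mul_geometric_one_div_ten.add hm

lemma tsum_add_mul_geometric_one_div_ten (m : ℝ) :
    ∑' k : ℕ, (k + m) * (1 / 10 : ℝ) ^ k = 10 / 81 + 10 / 9 * m := by
  have hm : Summable (fun k : ℕ => m * (1 / 10 : ℝ) ^ k) :=
    (summable_geometric_of_lt_one (by norm_num) (by norm_num)).mul_left m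
  simp only [add_mul]
  rw [summable_coe_mul_geometric_one_div_ten.tsum_add hm,
    tsum_coe_mul_geometric_of_norm_lt_one (by norm_num), tsum_mul_left,
    tsum_geometric_of_lt_one (by norm_num) (by norm_num)]
  ring

lemma summable_champernowneTerm : Summable champernowneTerm := by
  refine (summable_add_mul_geometric_one_div_ten 0).of_nonneg_of_le champernowneTerm_nonneg
    fun n => ?_
  simpa [pos] using champernowneTerm_add_le 0 n

lemma tsum_champernowneTerm_add_le (m : ℕ) :
    ∑' k, champernowneTerm (k + m) ≤ (1 / 10) ^ pos m * (10 / 81 + 10 / 9 * m) := by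
  rw [← tsum_add_mul_geometric_one_div_ten, ← tsum_mul_left]
  exact ((summable_nat_add_iff m).2 summable_champernowneTerm).tsum_le_tsum
    (champernowneTerm_add_le m) ((summable_add_mul_geometric_one_div_ten m).mul_left _)

lemma sum_range_champernowneTerm_eleven :
    ∑ i ∈ Finset.range 11, champernowneTerm i = 1234567891 / 10 ^ 10 := by
  simp [Finset.sum_range_succ, champernowneTerm, pos, Finset.sum_Icc_succ_top]
  norm_num

lemma C₁₀_eq_tsum_champernowneTerm : C₁₀ = ∑' n, champernowneTerm n := by
  rw [summable_champernowneTerm.tsum_eq_zero_add]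
  simp [C₁₀, champernowneTerm]

lemma C₁₀_eq_add_tsum :
    C₁₀ = 1234567891 / 10 ^ 10 + ∑' k, champernowneTerm (k + 11) := by
  rw [C₁₀_eq_tsum_champernowneTerm, ← summable_champernowneTerm.sum_add_tsum_nat_add 11,
    sum_range_champernowneTerm_eleven]

theorem hwm5_numerator_from_ten_digits :
    ⌊(10 : ℝ) ^ (10 : ℕ) * C₁₀⌋ = 1234567891 ∧
    ⌈(490050000000 : ℝ) * (1234567891 / 10 ^ (10 : ℕ))⌉ = 60499999499 := by
  have htail_nonneg : 0 ≤ ∑' k, champernowneTerm (k + 11) :=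
    tsum_nonneg fun k => champernowneTerm_nonneg _
  have htail_lt : ∑' k, champernowneTerm (k + 11) < 1 / 10 ^ 10 := by
    refine (tsum_champernowneTerm_add_le 11).trans_lt ?_
    rw [pos_eleven]
    norm_num
  refine ⟨?_, by rw [Int.ceil_eq_iff]; norm_num⟩
  rw [C₁₀_eq_add_tsum, Int.floor_eq_iff]
  push_cast
  constructor <;> nlinarith
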